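/- Suppose g is n-times differentiable on an interval [a,b] containing the support of X and m = E[X], with g^{(j)}(x) ≥ 0 for all x in [a,b] and all 3 ≤ j ≤ n. If the n-th derivative g^{(n)} is bounded on [a,b] by M and E[|X-m|^n] < ∞, then E[g(X)] - g(m) - (g''(m)/2)·Var[X] ≤ Σ_{j=3}^{n-1} (E[|X-m|^j]/j!)·g^{(j)}(m) + (M/n!)·E[|X-m|^n]. -/

import Mathlib

open MeasureTheory ProbabilityTheory

/-!
Taylor's theorem with Lagrange remainder at `m` bounds `g(x)` by its quadratic Taylor polynomial
plus `∑_{3 ≤ j < n} |x - m|^j g^{(j)}(m) / j! + M |x - m|^n / n!`: each higher term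
`(x - m)^j g^{(j)}(m)` is at most `|x - m|^j g^{(j)}(m)` because `g^{(j)}(m) ≥ 0`, and the
remainder is at most `M |x - m|^n / n!`. Taking expectations, the linear term vanishes since
`E[X - m] = 0` and the quadratic term becomes `g''(m) Var[X] / 2`.
-/

open Set Nat

lemma iteratedDerivWithin_eqOn_of_hasDerivWithinAt {n : ℕ} {G : ℕ → ℝ → ℝ} {s : Set ℝ}
    (hs : UniqueDiffOn ℝ s) (hG : ∀ k < n, ∀ t ∈ s, HasDerivWithinAt (G k) (G (k + 1) t) s t)
    {k : ℕ} (hk : k ≤ n) : EqOn (iteratedDerivWithin k (G 0) s) (G k) s := by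
  induction k with
  | zero => simp [EqOn]
  | succ k ih =>
    intro t ht
    rw [iteratedDerivWithin_succ, derivWithin_congr (ih (by omega)) (ih (by omega) ht)]
    exact (hG k hk t ht).derivWithin (hs t ht)

lemma exists_taylor_lagrange_of_hasDerivWithinAt {n : ℕ} (hn : n ≠ 0) {G : ℕ → ℝ → ℝ}
    {x₀ x : ℝ}
    (hG : ∀ k < n, ∀ t ∈ uIcc x₀ x, HasDerivWithinAt (G k) (G (k + 1) t) (uIcc x₀ x) t) :
    ∃ ξ ∈ uIcc x₀ x, G 0 x - ∑ j ∈ Finset.range n, (x - x₀) ^ j / j ! * G j x₀ =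
      G n ξ * (x - x₀) ^ n / n ! := by
  rcases eq_or_ne x₀ x with rfl | hx
  · refine ⟨x₀, left_mem_uIcc, ?_⟩
    rw [Finset.sum_eq_single_of_mem 0 (by simpa using Nat.pos_of_ne_zero hn)
      (fun j _ hj => by simp [zero_pow hj])]
    simp [zero_pow hn]
  have hs : UniqueDiffOn ℝ (uIcc x₀ x) := uniqueDiffOn_uIcc hx
  have hiter := fun k (hk : k ≤ n) => iteratedDerivWithin_eqOn_of_hasDerivWithinAt hs hG hk
  have hdiff : ∀ k < n, DifferentiableOn ℝ (iteratedDerivWithin k (G 0) (uIcc x₀ x))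
      (uIcc x₀ x) := fun k hk t ht =>
    ((hG k hk t ht).differentiableWithinAt).congr (hiter k hk.le) (hiter k hk.le ht)
  obtain ⟨ξ, hξ, h⟩ := taylor_mean_remainder_lagrange (n := n - 1) hx
    (contDiffOn_of_differentiableOn_deriv fun k hk => hdiff k (by norm_cast at hk; omega))
    ((hdiff (n - 1) (by omega)).mono uIoo_subset_uIcc_self)
  refine ⟨ξ, uIoo_subset_uIcc_self hξ, ?_⟩
  rw [taylor_within_apply, Nat.sub_add_cancel (Nat.one_le_iff_ne_zero.mpr hn),
    hiter n le_rfl (uIoo_subset_uIcc_self hξ)] at h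
  rw [← h]
  congr 1
  refine Finset.sum_congr rfl fun j hj => ?_
  rw [hiter j (Finset.mem_range.mp hj).le left_mem_uIcc, smul_eq_mul]
  ring

noncomputable def taylorMajorant (G : ℕ → ℝ → ℝ) (n : ℕ) (M x₀ x : ℝ) : ℝ :=
  G 0 x₀ + G 1 x₀ * (x - x₀) + G 2 x₀ / 2 * (x - x₀) ^ 2 +
    ∑ j ∈ Finset.Ico 3 n, |x - x₀| ^ j / j ! * G j x₀ + M / n ! * |x - x₀| ^ n

lemma le_taylorMajorant {n : ℕ} (hn : 3 ≤ n) {G : ℕ → ℝ → ℝ} {x₀ x M : ℝ}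
    (hG : ∀ k < n, ∀ t ∈ uIcc x₀ x, HasDerivWithinAt (G k) (G (k + 1) t) (uIcc x₀ x) t)
    (hpos : ∀ j ∈ Finset.Ico 3 n, 0 ≤ G j x₀) (hM : ∀ t ∈ uIcc x₀ x, |G n t| ≤ M) :
    G 0 x ≤ taylorMajorant G n M x₀ x := by
  obtain ⟨ξ, hξ, htaylor⟩ := exists_taylor_lagrange_of_hasDerivWithinAt (by omega) hG
  have hlow : ∑ j ∈ Finset.range 3, (x - x₀) ^ j / j ! * G j x₀ =
      G 0 x₀ + G 1 x₀ * (x - x₀) + G 2 x₀ / 2 * (x - x₀) ^ 2 := by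
    simp [Finset.sum_range_succ, Nat.factorial]
    ring
  have hhigh : ∑ j ∈ Finset.Ico 3 n, (x - x₀) ^ j / j ! * G j x₀ ≤
      ∑ j ∈ Finset.Ico 3 n, |x - x₀| ^ j / j ! * G j x₀ := by
    refine Finset.sum_le_sum fun j hj => ?_
    gcongr ?_ / _ * _
    · exact hpos j hj
    · rw [← abs_pow]; exact le_abs_self _
  have hrem : G n ξ * (x - x₀) ^ n / n ! ≤ M / n ! * |x - x₀| ^ n := by
    calc G n ξ * (x - x₀) ^ n / n ! ≤ |G n ξ| * |x - x₀| ^ n / n ! := by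
          rw [← abs_pow, ← abs_mul]; gcongr; exact le_abs_self _
      _ ≤ M * |x - x₀| ^ n / n ! := by gcongr; exact hM ξ hξ
      _ = M / n ! * |x - x₀| ^ n := by ring
  rw [← Finset.sum_range_add_sum_Ico _ hn, hlow] at htaylor
  unfold taylorMajorant
  linarith

section Integral

variable {Ω : Type*} [MeasurableSpace Ω] {μ : Measure Ω} {X : Ω → ℝ} {m : ℝ} {n : ℕ}

lemma integrable_taylorMajorant [IsFiniteMeasure μ] (hX : MemLp X 2 μ)
    (hmom : ∀ j ≤ n, Integrable (fun ω => |X ω - m| ^ j) μ) (G : ℕ → ℝ → ℝ) (M : ℝ) :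
    Integrable (fun ω => taylorMajorant G n M m (X ω)) μ := by
  have hlin : Integrable (fun ω => X ω - m) μ :=
    (hX.integrable one_le_two).sub (integrable_const m)
  have hsq : Integrable (fun ω => (X ω - m) ^ 2) μ := (hX.sub (memLp_const m)).integrable_sq
  have hhigh : Integrable (fun ω => ∑ j ∈ Finset.Ico 3 n, |X ω - m| ^ j / j ! * G j m) μ :=
    integrable_finsetSum _ fun j hj =>
      ((hmom j (Finset.mem_Ico.mp hj).2.le).div_const _).mul_const _
  have hrem := hmom n le_rfl
  unfold taylorMajorant
  fun_prop

lemma integral_taylorMajorant [IsProbabilityMeasure μ] (hX : MemLp X 2 μ)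
    (hm : m = ∫ ω, X ω ∂μ) (hmom : ∀ j ≤ n, Integrable (fun ω => |X ω - m| ^ j) μ)
    (G : ℕ → ℝ → ℝ) (M : ℝ) :
    ∫ ω, taylorMajorant G n M m (X ω) ∂μ =
      G 0 m + G 2 m / 2 * variance X μ +
        ∑ j ∈ Finset.Ico 3 n, (∫ ω, |X ω - m| ^ j ∂μ) / j ! * G j m +
          M / n ! * ∫ ω, |X ω - m| ^ n ∂μ := by
  have hX1 : Integrable X μ := hX.integrable one_le_two
  have hlin : Integrable (fun ω => X ω - m) μ := hX1.sub (integrable_const m)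
  have hsq : Integrable (fun ω => (X ω - m) ^ 2) μ := (hX.sub (memLp_const m)).integrable_sq
  have hhigh : ∀ j ∈ Finset.Ico 3 n,
      Integrable (fun ω => |X ω - m| ^ j / j ! * G j m) μ := fun j hj =>
    ((hmom j (Finset.mem_Ico.mp hj).2.le).div_const _).mul_const _
  have hsum := integrable_finsetSum _ hhigh
  have hrem := hmom n le_rfl
  have hcentered : ∫ ω, (X ω - m) ∂μ = 0 := by
    simp [integral_sub hX1 (integrable_const m), ← hm]
  have hvar : ∫ ω, (X ω - m) ^ 2 ∂μ = variance X μ := by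
    rw [variance_eq_integral hX.aemeasurable, hm]
  unfold taylorMajorant
  rw [integral_add (by fun_prop) (by fun_prop), integral_add (by fun_prop) hsum,
    integral_add (by fun_prop) (by fun_prop), integral_add (by fun_prop) (by fun_prop),
    integral_const, integral_const_mul, integral_const_mul, integral_const_mul,
    integral_finsetSum _ hhigh, hcentered, hvar]
  simp [integral_div, integral_mul_const]

end Integral

theorem stmt_12 {Ω : Type*} [MeasurableSpace Ω] (μ : Measure Ω) [IsProbabilityMeasure μ]
    (X : Ω → ℝ) (a b : ℝ) (hI : ∀ ω, X ω ∈ Set.Icc a b)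
    (n : ℕ) (hn : 3 ≤ n) (G : ℕ → ℝ → ℝ)
    (hG : ∀ k < n, ∀ t ∈ Set.Icc a b, HasDerivAt (G k) (G (k + 1) t) t)
    (hpos : ∀ j, 3 ≤ j → j ≤ n → ∀ t ∈ Set.Icc a b, 0 ≤ G j t)
    (M : ℝ) (hM : ∀ t ∈ Set.Icc a b, |G n t| ≤ M)
    (m : ℝ) (hm : m = ∫ ω, X ω ∂μ) (hmI : m ∈ Set.Icc a b)
    (hmom : ∀ j ≤ n, Integrable (fun ω => |X ω - m| ^ j) μ)
    (hgX : Integrable (fun ω => G 0 (X ω)) μ)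
    (hX2 : MemLp X 2 μ) :
    (∫ ω, G 0 (X ω) ∂μ) - G 0 m - G 2 m / 2 * variance X μ ≤
      (∑ j ∈ Finset.Ico 3 n,
        (∫ ω, |X ω - m| ^ j ∂μ) / (Nat.factorial j) * G j m) +
      M / (Nat.factorial n) * ∫ ω, |X ω - m| ^ n ∂μ := by
  have hle : ∀ ω, G 0 (X ω) ≤ taylorMajorant G n M m (X ω) := fun ω =>
    have hsub := uIcc_subset_Icc hmI (hI ω)
    le_taylorMajorant hn (fun k hk t ht => (hG k hk t (hsub ht)).hasDerivWithinAt)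
      (fun j hj => hpos j (Finset.mem_Ico.mp hj).1 (Finset.mem_Ico.mp hj).2.le m hmI)
      (fun t ht => hM t (hsub ht))
  have hmono := integral_mono hgX (integrable_taylorMajorant hX2 hmom G M) hle
  rw [integral_taylorMajorant hX2 hm hmom] at hmono
  linarith
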